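/- Let Y be a topological space, n ≥ 1, and let U₁, U₂, U₃, U₄, U₅ : Y → M_n(ℂ) be continuous mappings such that for every y ∈ Y the matrices U₁(y), U₃(y), U₅(y) are upper unitriangular and U₂(y), U₄(y) are lower unitriangular. Then there exist continuous mappings A, B, C : Y → M_n(ℂ) with A(y), B(y), C(y) nilpotent for every y, such that U₁(y)·U₂(y)·U₃(y)·U₄(y)·U₅(y) = exp(A(y))·exp(B(y))·exp(C(y)) for all y ∈ Y. -/

import Mathlib

/-!
Conjugating by `U₁` and by `U₁U₃` rewrites `U₁U₂U₃U₄U₅` as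
`(U₁U₂U₁⁻¹)((U₁U₃)U₄(U₁U₃)⁻¹)(U₁U₃U₅)`, a product of three unipotent factors depending
continuously on `y` (`det U₁ = det U₃ = 1`). A unipotent `W` with `(W - 1)ⁿ = 0` is `exp L` for
the nilpotent `L = log(1 + (W - 1))`, where the logarithm series is truncated at degree `n`; being
a fixed polynomial in `W`, `L` depends continuously on `W`. The identity
`exp (log (1 + N)) = 1 + N` for `Nᵐ⁺¹ = 0` reduces to the divisibility
`X^(m+1) ∣ E ∘ L - (1 + X)` for the truncated series `E`, `L` of `exp` and `log (1 + X)`: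
`F = E ∘ L - (1 + X)` vanishes at `0` and satisfies `(1 + X) F' ≡ F` modulo `X^m`, and comparing
coefficients shows that such an `F` is divisible by `X^(m+1)`.
-/

/-- `M` is lower unitriangular. -/
def IsLowerUnitriangular {m : ℕ} (M : Matrix (Fin m) (Fin m) ℂ) : Prop :=
  (∀ i, M i i = 1) ∧ ∀ i j : Fin m, i < j → M i j = 0

/-- `M` is upper unitriangular. -/
def IsUpperUnitriangular {m : ℕ} (M : Matrix (Fin m) (Fin m) ℂ) : Prop :=
  (∀ i, M i i = 1) ∧ ∀ i j : Fin m, j < i → M i j = 0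

open Polynomial Finset
open scoped Nat

noncomputable def expTrunc (k : ℕ) : ℚ[X] :=
  ∑ i ∈ range k, C (i ! : ℚ)⁻¹ * X ^ i

-- The `i = 0` term vanishes because `(-1) / 0 = 0` in `ℚ`.
noncomputable def logOneAddTrunc (k : ℕ) : ℚ[X] :=
  ∑ i ∈ range k, C ((-1) ^ (i + 1) / i : ℚ) * X ^ i

theorem expTrunc_succ (m : ℕ) : expTrunc (m + 1) = expTrunc m + C (m ! : ℚ)⁻¹ * X ^ m :=
  sum_range_succ _ _

theorem derivative_expTrunc_succ (m : ℕ) : derivative (expTrunc (m + 1)) = expTrunc m := by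
  rw [expTrunc, derivative_sum, sum_range_succ']
  simp only [derivative_C_mul_X_pow, Nat.cast_zero, mul_zero, C_0, zero_mul, add_zero,
    add_tsub_cancel_right, expTrunc]
  refine sum_congr rfl fun i _ => ?_
  congr 2
  push_cast [Nat.factorial_succ]
  field_simp

theorem derivative_logOneAddTrunc_succ (m : ℕ) :
    derivative (logOneAddTrunc (m + 1)) = ∑ i ∈ range m, (-X) ^ i := by
  rw [logOneAddTrunc, derivative_sum, sum_range_succ']
  simp only [derivative_C_mul_X_pow, Nat.cast_zero, mul_zero, C_0, zero_mul, add_zero,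
    add_tsub_cancel_right]
  refine sum_congr rfl fun i _ => ?_
  rw [div_mul_cancel₀ _ (by positivity), neg_pow (X : ℚ[X])]
  simp [pow_succ]

theorem one_add_X_mul_derivative_logOneAddTrunc_succ (m : ℕ) :
    (1 + X) * derivative (logOneAddTrunc (m + 1)) = 1 - (-X) ^ m := by
  rw [derivative_logOneAddTrunc_succ]
  linear_combination -geom_sum_mul (-X : ℚ[X]) m

theorem X_dvd_logOneAddTrunc (k : ℕ) : X ∣ logOneAddTrunc k := by
  simp [X_dvd_iff, logOneAddTrunc, coeff_X_pow]

theorem eval_zero_expTrunc_succ (m : ℕ) : (expTrunc (m + 1)).eval 0 = 1 := by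
  simp [expTrunc, eval_finsetSum, sum_range_succ']

theorem coeff_one_add_X_mul_derivative_sub {R : Type*} [CommRing R] (q : R[X]) (j : ℕ) :
    ((1 + X) * derivative q - q).coeff j =
      q.coeff (j + 1) * (j + 1) + q.coeff j * j - q.coeff j := by
  rw [add_mul, one_mul, coeff_sub, coeff_add, coeff_derivative]
  cases j with
  | zero => simp
  | succ j => simp [coeff_X_mul, coeff_derivative]

theorem X_pow_succ_dvd_of_X_pow_dvd_one_add_X_mul_derivative_sub {K : Type*} [Field K]
    [CharZero K] {q : K[X]} {m : ℕ} (h0 : q.coeff 0 = 0)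
    (h : X ^ m ∣ (1 + X) * derivative q - q) : X ^ (m + 1) ∣ q := by
  rw [X_pow_dvd_iff] at h ⊢
  intro d hd
  induction d with
  | zero => exact h0
  | succ j ih =>
    have hj := h j (by omega)
    rw [coeff_one_add_X_mul_derivative_sub, ih (by omega)] at hj
    simpa [Nat.cast_add_one_ne_zero] using hj

theorem X_pow_succ_dvd_expTrunc_comp_logOneAddTrunc_sub (m : ℕ) :
    X ^ (m + 1) ∣ (expTrunc (m + 1)).comp (logOneAddTrunc (m + 1)) - (1 + X) := by
  set L := logOneAddTrunc (m + 1)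
  set F := (expTrunc (m + 1)).comp L
  set c : ℚ := (m ! : ℚ)⁻¹
  have hL0 : L.eval 0 = 0 := by
    rw [← coeff_zero_eq_eval_zero, ← X_dvd_iff]; exact X_dvd_logOneAddTrunc _
  have hF' : derivative F = derivative L * (F - C c * L ^ m) := by
    rw [derivative_comp, derivative_expTrunc_succ, eq_sub_of_add_eq (expTrunc_succ m).symm]
    simp [F, c, sub_comp, mul_comp]
  obtain ⟨s, hs⟩ : X ^ m ∣ L ^ m := pow_dvd_pow_of_dvd (X_dvd_logOneAddTrunc _) m
  apply X_pow_succ_dvd_of_X_pow_dvd_one_add_X_mul_derivative_sub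
  · simp [coeff_zero_eq_eval_zero, F, eval_comp, hL0, eval_zero_expTrunc_succ]
  · refine ⟨-(-1) ^ m * (F - C c * L ^ m) - C c * s, ?_⟩
    rw [derivative_sub, derivative_add, derivative_one, derivative_X, zero_add, hF']
    linear_combination
      (F - C c * L ^ m) * one_add_X_mul_derivative_logOneAddTrunc_succ m - C c * hs

section NilpotentLog

variable {A : Type*} [Ring A] [Algebra ℚ A] {a : A} {k : ℕ}

theorem IsNilpotent.exp_eq_aeval_expTrunc (h : a ^ k = 0) :
    IsNilpotent.exp a = aeval a (expTrunc k) := by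
  simp [IsNilpotent.exp_eq_sum h, expTrunc, Algebra.smul_def]

theorem aeval_logOneAddTrunc_pow_eq_zero (h : a ^ k = 0) :
    aeval a (logOneAddTrunc k) ^ k = 0 := by
  obtain ⟨s, hs⟩ := X_dvd_logOneAddTrunc k
  rw [← map_pow, hs, mul_pow, map_mul, map_pow, aeval_X, h, zero_mul]

theorem IsNilpotent.exp_aeval_logOneAddTrunc (h : a ^ k = 0) :
    IsNilpotent.exp (aeval a (logOneAddTrunc k)) = 1 + a := by
  cases k with
  | zero =>
    have : Subsingleton A := subsingleton_of_zero_eq_one (by simpa using h.symm)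
    exact Subsingleton.elim _ _
  | succ m =>
    obtain ⟨Q, hQ⟩ := X_pow_succ_dvd_expTrunc_comp_logOneAddTrunc_sub m
    rw [IsNilpotent.exp_eq_aeval_expTrunc (aeval_logOneAddTrunc_pow_eq_zero h), ← aeval_comp,
      eq_add_of_sub_eq hQ]
    simp [h]

theorem NormedSpace.exp_eq_isNilpotent_exp [TopologicalSpace A] [IsTopologicalRing A]
    (ha : IsNilpotent a) : NormedSpace.exp a = IsNilpotent.exp a := by
  obtain ⟨k, hk⟩ := ha
  rw [NormedSpace.exp_eq_tsum_rat, IsNilpotent.exp_eq_sum hk]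
  exact tsum_eq_sum fun i hi => by
    rw [pow_eq_zero_of_le (by simpa using hi) hk, smul_zero]

theorem exists_continuous_isNilpotent_exp_eq {Y : Type*} [TopologicalSpace Y]
    [TopologicalSpace A] [IsTopologicalRing A] {W : Y → A} (hW : Continuous W)
    (hk : ∀ y, (W y - 1) ^ k = 0) :
    ∃ L : Y → A, Continuous L ∧ (∀ y, IsNilpotent (L y)) ∧
      ∀ y, NormedSpace.exp (L y) = W y := by
  have hnil y : IsNilpotent (aeval (W y - 1) (logOneAddTrunc k)) :=
    ⟨k, aeval_logOneAddTrunc_pow_eq_zero (hk y)⟩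
  refine ⟨fun y => aeval (W y - 1) (logOneAddTrunc k),
    (logOneAddTrunc k).continuous_aeval.comp (hW.sub continuous_const), hnil, fun y => ?_⟩
  rw [NormedSpace.exp_eq_isNilpotent_exp (hnil y),
    IsNilpotent.exp_aeval_logOneAddTrunc (hk y), add_sub_cancel]

end NilpotentLog

namespace Matrix

variable {n R : Type*} [Fintype n]

theorem IsUpperTriangular.pow_card_eq_zero [DecidableEq n] [LinearOrder n] [CommRing R]
    {M : Matrix n n R} (h : M.IsUpperTriangular) (hdiag : ∀ i, M i i = 0) :
    M ^ Fintype.card n = 0 := by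
  simpa [charpoly_of_isUpperTriangular M h, hdiag] using M.aeval_self_charpoly

theorem IsLowerTriangular.pow_card_eq_zero [DecidableEq n] [LinearOrder n] [CommRing R]
    {M : Matrix n n R} (h : M.IsLowerTriangular) (hdiag : ∀ i, M i i = 0) :
    M ^ Fintype.card n = 0 := by
  have := IsUpperTriangular.pow_card_eq_zero (M := Mᵀ) h.transpose hdiag
  rwa [← transpose_pow, transpose_eq_zero] at this

theorem IsUpperTriangular.mul_apply_self [LinearOrder n] [CommRing R] {M N : Matrix n n R}
    (hM : M.IsUpperTriangular) (hN : N.IsUpperTriangular) (i : n) :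
    (M * N) i i = M i i * N i i := by
  rw [mul_apply, sum_eq_single i (fun k _ hk => ?_) (by simp)]
  rcases hk.lt_or_gt with hki | hik
  · rw [hM hki, zero_mul]
  · rw [hN hik, mul_zero]

theorem conj_sub_one_pow_eq_zero [DecidableEq n] [CommRing R] {P M : Matrix n n R} {k : ℕ}
    (hP : IsUnit P.det) (h : (M - 1) ^ k = 0) : (P * M * P⁻¹ - 1) ^ k = 0 := by
  have hconj : P * M * P⁻¹ - 1 = P * (M - 1) * P⁻¹ := by
    rw [mul_sub, sub_mul, mul_one, mul_nonsing_inv _ hP]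
  have := Units.conj_pow ((isUnit_iff_isUnit_det P).mpr hP).unit (M - 1) k
  simp only [IsUnit.unit_spec, coe_units_inv] at this
  rw [hconj, this, h, mul_zero, zero_mul]

theorem mul_five_eq_conj_mul_conj_mul [DecidableEq n] [CommRing R]
    {U₁ U₂ U₃ U₄ U₅ : Matrix n n R}    (h₁ : IsUnit U₁.det) (h₃ : IsUnit U₃.det) :
    U₁ * U₂ * U₃ * U₄ * U₅ = U₁ * U₂ * U₁⁻¹ * (U₁ * U₃ * U₄ * (U₁ * U₃)⁻¹) * (U₁ * U₃ * U₅) := by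
  simp only [mul_inv_rev, mul_assoc, nonsing_inv_mul_cancel_left _ _ h₁,
    nonsing_inv_mul_cancel_left _ _ h₃]

end Matrix

theorem Continuous.matrix_inv_of_det_ne_zero {X n K : Type*} [TopologicalSpace X] [Fintype n]
    [DecidableEq n] [Field K] [TopologicalSpace K] [IsTopologicalRing K] [ContinuousInv₀ K]
    {A : X → Matrix n n K} (hA : Continuous A) (h : ∀ x, (A x).det ≠ 0) :
    Continuous fun x => (A x)⁻¹ := by
  simp_rw [Matrix.inv_def, Ring.inverse_eq_inv']
  exact (hA.matrix_det.inv₀ h).smul hA.matrix_adjugate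

namespace IsUpperUnitriangular

variable {m : ℕ} {U V : Matrix (Fin m) (Fin m) ℂ}

theorem isUpperTriangular (hU : IsUpperUnitriangular U) : U.IsUpperTriangular :=
  fun i j h => hU.2 i j h

theorem det_eq_one (hU : IsUpperUnitriangular U) : U.det = 1 := by
  simp [Matrix.det_of_isUpperTriangular hU.isUpperTriangular, hU.1]

theorem sub_one_pow_eq_zero (hU : IsUpperUnitriangular U) : (U - 1) ^ m = 0 := by
  simpa using Matrix.IsUpperTriangular.pow_card_eq_zero
    (hU.isUpperTriangular.sub Matrix.blockTriangular_one) (by simp [hU.1])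

theorem mul (hU : IsUpperUnitriangular U) (hV : IsUpperUnitriangular V) :
    IsUpperUnitriangular (U * V) :=
  ⟨fun i => by rw [hU.isUpperTriangular.mul_apply_self hV.isUpperTriangular, hU.1, hV.1, one_mul],
    fun i j h => hU.isUpperTriangular.mul hV.isUpperTriangular h⟩

end IsUpperUnitriangular

namespace IsLowerUnitriangular

variable {m : ℕ} {U : Matrix (Fin m) (Fin m) ℂ}

theorem isLowerTriangular (hU : IsLowerUnitriangular U) : U.IsLowerTriangular :=
  fun i j h => hU.2 i j h

theorem sub_one_pow_eq_zero (hU : IsLowerUnitriangular U) : (U - 1) ^ m = 0 := by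
  simpa using Matrix.IsLowerTriangular.pow_card_eq_zero
    (hU.isLowerTriangular.sub Matrix.blockTriangular_one) (by simp [hU.1])

end IsLowerUnitriangular

theorem stmt9_general {Y : Type*} [TopologicalSpace Y] (n : ℕ)
    (U₁ U₂ U₃ U₄ U₅ : Y → Matrix (Fin n) (Fin n) ℂ)
    (hc₁ : Continuous U₁) (hc₂ : Continuous U₂) (hc₃ : Continuous U₃)
    (hc₄ : Continuous U₄) (hc₅ : Continuous U₅)
    (hu₁ : ∀ y, IsUpperUnitriangular (U₁ y))
    (hu₂ : ∀ y, IsLowerUnitriangular (U₂ y))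
    (hu₃ : ∀ y, IsUpperUnitriangular (U₃ y))
    (hu₄ : ∀ y, IsLowerUnitriangular (U₄ y))
    (hu₅ : ∀ y, IsUpperUnitriangular (U₅ y)) :
    ∃ A B C : Y → Matrix (Fin n) (Fin n) ℂ,
      Continuous A ∧ Continuous B ∧ Continuous C ∧
      (∀ y, IsNilpotent (A y)) ∧ (∀ y, IsNilpotent (B y)) ∧ (∀ y, IsNilpotent (C y)) ∧
      (∀ y, U₁ y * U₂ y * U₃ y * U₄ y * U₅ y =
        NormedSpace.exp (A y) * NormedSpace.exp (B y) * NormedSpace.exp (C y)) := by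
  have hdet₁ y : (U₁ y).det = 1 := (hu₁ y).det_eq_one
  have hdet₃ y : (U₃ y).det = 1 := (hu₃ y).det_eq_one
  have hdet₁₃ y : (U₁ y * U₃ y).det = 1 := ((hu₁ y).mul (hu₃ y)).det_eq_one
  obtain ⟨A, hA, hA_nil, hA_exp⟩ :=
    exists_continuous_isNilpotent_exp_eq (W := fun y => U₁ y * U₂ y * (U₁ y)⁻¹)
    ((hc₁.mul hc₂).mul (hc₁.matrix_inv_of_det_ne_zero (by simp [hdet₁])))
    fun y => Matrix.conj_sub_one_pow_eq_zero (by simp [hdet₁]) (hu₂ y).sub_one_pow_eq_zero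
  obtain ⟨B, hB, hB_nil, hB_exp⟩ :=
    exists_continuous_isNilpotent_exp_eq (W := fun y => U₁ y * U₃ y * U₄ y * (U₁ y * U₃ y)⁻¹)
    (((hc₁.mul hc₃).mul hc₄).mul ((hc₁.mul hc₃).matrix_inv_of_det_ne_zero (by simp [hdet₁₃])))
    fun y => Matrix.conj_sub_one_pow_eq_zero (by simp [hdet₁₃]) (hu₄ y).sub_one_pow_eq_zero
  obtain ⟨C, hC, hC_nil, hC_exp⟩ :=
    exists_continuous_isNilpotent_exp_eq (W := fun y => U₁ y * U₃ y * U₅ y)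
    ((hc₁.mul hc₃).mul hc₅) fun y => ((hu₁ y).mul (hu₃ y)).mul (hu₅ y) |>.sub_one_pow_eq_zero
  refine ⟨A, B, C, hA, hB, hC, hA_nil, hB_nil, hC_nil, fun y => ?_⟩
  rw [hA_exp, hB_exp, hC_exp,
    Matrix.mul_five_eq_conj_mul_conj_mul (by simp [hdet₁]) (by simp [hdet₃])]

/-- A continuous product of five alternately upper/lower unitriangular matrix-valued maps
is a product of three exponentials of continuous nilpotent-valued maps. -/
theorem stmt9 {Y : Type*} [TopologicalSpace Y] (n : ℕ) (hn : 1 ≤ n)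
    (U₁ U₂ U₃ U₄ U₅ : Y → Matrix (Fin n) (Fin n) ℂ)
    (hc₁ : Continuous U₁) (hc₂ : Continuous U₂) (hc₃ : Continuous U₃)
    (hc₄ : Continuous U₄) (hc₅ : Continuous U₅)
    (hu₁ : ∀ y, IsUpperUnitriangular (U₁ y))
    (hu₂ : ∀ y, IsLowerUnitriangular (U₂ y))
    (hu₃ : ∀ y, IsUpperUnitriangular (U₃ y))
    (hu₄ : ∀ y, IsLowerUnitriangular (U₄ y))
    (hu₅ : ∀ y, IsUpperUnitriangular (U₅ y)) :
    ∃ A B C : Y → Matrix (Fin n) (Fin n) ℂ,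
      Continuous A ∧ Continuous B ∧ Continuous C ∧
      (∀ y, IsNilpotent (A y)) ∧ (∀ y, IsNilpotent (B y)) ∧ (∀ y, IsNilpotent (C y)) ∧
      (∀ y, U₁ y * U₂ y * U₃ y * U₄ y * U₅ y =
        NormedSpace.exp (A y) * NormedSpace.exp (B y) * NormedSpace.exp (C y)) :=
  stmt9_general n U₁ U₂ U₃ U₄ U₅ hc₁ hc₂ hc₃ hc₄ hc₅ hu₁ hu₂ hu₃ hu₄ hu₅
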